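/- arXiv:2502.19301 — 5 statements merged into one kernel-verified Lean document; each statement's English description precedes it below -/
import Mathlib

section
/- Let E be a real Hilbert space, T a natural number, θ₀ ∈ E, and for each t < T let L_t : E → ℝ be differentiable on E with continuous gradient map ∇L_t. Define the SGD trajectory θ : ℝ → ℕ → E recursively by θ(η,0) = θ₀ and θ(η,t+1) = θ(η,t) − η • ∇L_t(θ(η,t)). Then the map η ↦ θ(η,T) is differentiable at η = 0 with derivative −(Σ_{t<T} ∇L_t(θ₀)); equivalently, θ(η,T) = θ₀ − η • Σ_{t<T} ∇L_t(θ₀) + o(η) as η → 0. -/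
lemma smul_hasDerivAt_of_continuousAt {E : Type*} [NormedAddCommGroup E]
    [NormedSpace ℝ E] (g : ℝ → E) (hg : ContinuousAt g 0) :
    HasDerivAt (fun η : ℝ => η • g η) (g 0) 0 := by
  rw [hasDerivAt_iff_tendsto_slope]
  have hcong : ∀ η ∈ ({(0:ℝ)}ᶜ : Set ℝ), g η = slope (fun η : ℝ => η • g η) 0 η := by
    intro η hη
    have hη' : η ≠ 0 := hη
    simp [slope, smul_smul, inv_mul_cancel₀ hη']
  exact tendsto_nhdsWithin_congr hcong (hg.continuousWithinAt)

/-- First-order (in the step size) expansion of the SGD/unlearning trajectory: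
the map `η ↦ θ(η, T)` is differentiable at `η = 0` with derivative
`-(∑_{t<T} ∇L_t(θ₀))`. -/
theorem sgd_trajectory_first_order
    {E : Type*} [NormedAddCommGroup E] [InnerProductSpace ℝ E] [CompleteSpace E]
    (T : ℕ) (θ₀ : E) (L : ℕ → E → ℝ)
    (hL : ∀ t < T, Differentiable ℝ (L t))
    (hgrad : ∀ t < T, Continuous (fun x => gradient (L t) x))
    (θ : ℝ → ℕ → E)
    (hθ0 : ∀ η : ℝ, θ η 0 = θ₀)
    (hθ : ∀ (η : ℝ) (t : ℕ), θ η (t + 1) = θ η t - η • gradient (L t) (θ η t)) :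
    HasDerivAt (fun η : ℝ => θ η T)
      (-(∑ t ∈ Finset.range T, gradient (L t) θ₀)) 0 := by
  have hzero : ∀ n : ℕ, θ 0 n = θ₀ := by
    intro n
    induction n with
    | zero => exact hθ0 0
    | succ n ih => rw [hθ, ih]; simp
  have key : ∀ n : ℕ, n ≤ T →
      HasDerivAt (fun η : ℝ => θ η n)
        (-(∑ t ∈ Finset.range n, gradient (L t) θ₀)) 0 := by
    intro n hn
    induction n with
    | zero =>
        simp only [Finset.range_zero, Finset.sum_empty, neg_zero]
        have : (fun η : ℝ => θ η 0) = fun _ => θ₀ := funext hθ0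
        rw [this]
        exact hasDerivAt_const 0 θ₀
    | succ n ih =>
        have hnT : n < T := hn
        have ihn := ih (le_of_lt hnT)
        have hcont : ContinuousAt (fun η : ℝ => gradient (L n) (θ η n)) 0 :=
          (hgrad n hnT).continuousAt.comp ihn.continuousAt
        have hsm : HasDerivAt (fun η : ℝ => η • gradient (L n) (θ η n))
            (gradient (L n) θ₀) 0 := by
          have := smul_hasDerivAt_of_continuousAt
            (fun η : ℝ => gradient (L n) (θ η n)) hcont
          simp only [hzero n] at this; exact this
        have hmain : HasDerivAt (fun η : ℝ => θ η n - η • gradient (L n) (θ η n))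
            (-(∑ t ∈ Finset.range n, gradient (L t) θ₀) - gradient (L n) θ₀) 0 := ihn.sub hsm
        have heq : (fun η : ℝ => θ η n - η • gradient (L n) (θ η n))
            = fun η : ℝ => θ η (n + 1) := by
          funext η; rw [hθ]
        rw [heq] at hmain
        have : -(∑ t ∈ Finset.range n, gradient (L t) θ₀) - gradient (L n) θ₀
            = -(∑ t ∈ Finset.range (n + 1), gradient (L t) θ₀) := by
          rw [Finset.sum_range_succ]; abel
        rwa [this] at hmain
  exact key T le_rfl
end

section
/- Let E be a real Hilbert space, T a natural number, θ₀ ∈ E, and for each t < T let L_t : E → ℝ be such that its gradient map ∇L_t : E → E is differentiable on E with continuous derivative; write g_t = ∇L_t(θ₀) and let H_t : E →L[ℝ] E be the Fréchet derivative of ∇L_t at θ₀ (the Hessian operator). Define the SGD trajectory θ(η,0) = θ₀, θ(η,t+1) = θ(η,t) − η • ∇L_t(θ(η,t)). Then the remainder θ(η,T) − (θ₀ − η • Σ_{t<T} g_t + η² • Σ_{t<T} H_t(Σ_{t'<t} g_{t'})) is o(η²) as η → 0. -/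
/-!
Induct on `T`. If `θ(η,t) = θ₀ - η • S + η² • C + o(η²)`, then `θ(η,t) - θ₀ = O(η)`, so
differentiability of `∇L_t` at `θ₀` gives
`∇L_t(θ(η,t)) = g_t + H_t(θ(η,t) - θ₀) + o(η) = g_t - η • H_t S + O(η²)`.
Multiplied by `η`, the update therefore changes `S` to `S + g_t` and `C` to `C + H_t S`,
up to `o(η²)`.
-/

open Asymptotics Filter Topology Finset

section

variable {𝕜 E : Type*} [NontriviallyNormedField 𝕜] [NormedAddCommGroup E] [NormedSpace 𝕜 E]

theorem isBigO_smul_const {α : Type*} {l : Filter α} (f : α → 𝕜) (v : E) :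
    (fun x => f x • v) =O[l] f :=
  .of_bound ‖v‖ <| .of_forall fun x => by rw [norm_smul, mul_comm]

theorem isLittleO_step_sub_secondOrder {F : E → E} {A : E →L[𝕜] E} {x₀ : E}
    (hF : HasFDerivAt F A x₀) {φ : 𝕜 → E} {S C : E}
    (hφ : (fun η => φ η - (x₀ - η • S + η ^ 2 • C)) =o[𝓝 0] fun η => η ^ 2) :
    (fun η => φ η - η • F (φ η) - (x₀ - η • (S + F x₀) + η ^ 2 • (C + A S)))
      =o[𝓝 0] fun η => η ^ 2 := by
  have hη : (fun η : 𝕜 => η) =o[𝓝 0] fun _ => (1 : 𝕜) :=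
    (isLittleO_one_iff 𝕜).mpr tendsto_id
  have hsq : (fun η : 𝕜 => η ^ 2) =O[𝓝 0] fun η => η := by
    simpa [sq] using hη.isBigO.mul (isBigO_refl (fun η : 𝕜 => η) _)
  have hψ : (fun η => φ η - x₀ + η • S) =O[𝓝 0] fun η => η ^ 2 :=
    (hφ.isBigO.add (isBigO_smul_const _ C)).congr_left fun η => by abel
  have hdisp : (fun η => φ η - x₀) =O[𝓝 0] fun η => η :=
    ((hψ.trans hsq).sub (isBigO_smul_const _ S)).congr_left fun η => by abel
  have hlin : (fun η => F (φ η) - F x₀ - A (φ η - x₀)) =o[𝓝 0] fun η => η := by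
    have hφx₀ : Tendsto φ (𝓝 0) (𝓝 x₀) := by
      simpa using (hdisp.trans_tendsto tendsto_id).add_const x₀
    exact (hF.isLittleO.comp_tendsto hφx₀).trans_isBigO hdisp
  have h₁ : (fun η => η • (F (φ η) - F x₀ - A (φ η - x₀))) =o[𝓝 0] fun η => η ^ 2 := by
    simpa [sq] using (isBigO_refl (fun η : 𝕜 => η) _).smul_isLittleO hlin
  have h₂ : (fun η => η • A (φ η - x₀ + η • S)) =o[𝓝 0] fun η => η ^ 2 := by
    simpa using hη.smul_isBigO ((A.isBigO_comp _ _).trans hψ)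
  refine ((hφ.sub h₁).sub h₂).congr_left fun η => ?_
  simp only [map_add, map_sub, map_smul, smul_add, smul_sub]
  module

theorem isLittleO_trajectory_sub_secondOrder {F : ℕ → E → E} {A : ℕ → E →L[𝕜] E} {x₀ : E}
    {θ : 𝕜 → ℕ → E} (hθ0 : ∀ η, θ η 0 = x₀)
    (hθ : ∀ η t, θ η (t + 1) = θ η t - η • F t (θ η t)) :
    ∀ T, (∀ t < T, HasFDerivAt (F t) (A t) x₀) →
      (fun η => θ η T - (x₀ - η • ∑ t ∈ range T, F t x₀
        + η ^ 2 • ∑ t ∈ range T, A t (∑ s ∈ range t, F s x₀))) =o[𝓝 0] fun η => η ^ 2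
  | 0, _ => by simp [hθ0]
  | T + 1, hF => by
    simpa only [hθ, sum_range_succ] using isLittleO_step_sub_secondOrder
      (hF T T.lt_succ_self) (isLittleO_trajectory_sub_secondOrder hθ0 hθ T
        fun t ht => hF t (ht.trans T.lt_succ_self))

end

theorem sgd_trajectory_second_order_general
    {E : Type*} [NormedAddCommGroup E] [InnerProductSpace ℝ E] [CompleteSpace E]
    (T : ℕ) (θ₀ : E) (L : ℕ → E → ℝ)
    (hgrad : ∀ t < T, Differentiable ℝ (fun x => gradient (L t) x))
    (g : ℕ → E) (hg : ∀ t, g t = gradient (L t) θ₀)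
    (H : ℕ → E →L[ℝ] E) (hH : ∀ t, H t = fderiv ℝ (fun y => gradient (L t) y) θ₀)
    (θ : ℝ → ℕ → E)
    (hθ0 : ∀ η : ℝ, θ η 0 = θ₀)
    (hθ : ∀ (η : ℝ) (t : ℕ), θ η (t + 1) = θ η t - η • gradient (L t) (θ η t)) :
    (fun η : ℝ => θ η T -
        (θ₀ - η • ∑ t ∈ Finset.range T, g t
          + (η ^ 2) • ∑ t ∈ Finset.range T, H t (∑ t' ∈ Finset.range t, g t')))
      =o[nhds (0 : ℝ)] (fun η : ℝ => η ^ 2) := by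
  have hHessian : ∀ t < T, HasFDerivAt (gradient (L t)) (H t) θ₀ := fun t ht => by
    rw [hH]
    exact (hgrad t ht θ₀).hasFDerivAt
  simpa only [hg] using isLittleO_trajectory_sub_secondOrder hθ0 hθ T hHessian

/-- Second-order (in the step size) expansion of the SGD/unlearning trajectory:
`θ(η,T) = θ₀ - η • ∑_{t<T} g_t + η² • ∑_{t<T} H_t (∑_{t'<t} g_{t'}) + o(η²)`
as `η → 0`, where `g_t = ∇L_t(θ₀)` and `H_t` is the Hessian of `L_t` at `θ₀`. -/
theorem sgd_trajectory_second_order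
    {E : Type*} [NormedAddCommGroup E] [InnerProductSpace ℝ E] [CompleteSpace E]
    (T : ℕ) (θ₀ : E) (L : ℕ → E → ℝ)
    (hL : ∀ t < T, Differentiable ℝ (L t))
    (hgrad : ∀ t < T, Differentiable ℝ (fun x => gradient (L t) x))
    (hgrad' : ∀ t < T, Continuous (fun x => fderiv ℝ (fun y => gradient (L t) y) x))
    (g : ℕ → E) (hg : ∀ t, g t = gradient (L t) θ₀)
    (H : ℕ → E →L[ℝ] E) (hH : ∀ t, H t = fderiv ℝ (fun y => gradient (L t) y) θ₀)
    (θ : ℝ → ℕ → E)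
    (hθ0 : ∀ η : ℝ, θ η 0 = θ₀)
    (hθ : ∀ (η : ℝ) (t : ℕ), θ η (t + 1) = θ η t - η • gradient (L t) (θ η t)) :
    (fun η : ℝ => θ η T -
        (θ₀ - η • ∑ t ∈ Finset.range T, g t
          + (η ^ 2) • ∑ t ∈ Finset.range T, H t (∑ t' ∈ Finset.range t, g t')))
      =o[nhds (0 : ℝ)] (fun η : ℝ => η ^ 2) :=
  sgd_trajectory_second_order_general T θ₀ L hgrad g hg H hH θ hθ0 hθ
end

section
/- Let E be a real Hilbert space, T a natural number, θ₀ ∈ E, for each t < T let L_t : E → ℝ be differentiable on E with continuous gradient map ∇L_t, and let R : E → ℝ be differentiable at θ₀. Define the SGD trajectory θ(η,0) = θ₀, θ(η,t+1) = θ(η,t) − η • ∇L_t(θ(η,t)). Then the map η ↦ R(θ(η,T)) is differentiable at η = 0 with derivative −⟪∇R(θ₀), Σ_{t<T} ∇L_t(θ₀)⟫; that is, the first-order change of the risk R under unlearning updates equals minus the inner product of the risk gradient with the accumulated objective gradients (the G-effect). -/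
open Filter Topology

lemma smul_cont_hasDerivAt {E : Type*} [NormedAddCommGroup E] [NormedSpace ℝ E]
    (f : ℝ → E) (hf : ContinuousAt f 0) :
    HasDerivAt (fun η : ℝ => η • f η) (f 0) 0 := by
  rw [hasDerivAt_iff_tendsto_slope]
  have : ∀ η : ℝ, η ≠ 0 → slope (fun η : ℝ => η • f η) 0 η = f η := by
    intro η hη
    simp [slope, hη, smul_smul, inv_mul_cancel₀ hη]
  refine Tendsto.congr' ?_ (hf.continuousWithinAt.tendsto)
  filter_upwards [self_mem_nhdsWithin] with η hη
  exact (this η hη).symm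

/-- First-order change of a risk `R` along the SGD/unlearning trajectory:
`η ↦ R(θ(η,T))` is differentiable at `0` with derivative
`-⟪∇R(θ₀), ∑_{t<T} ∇L_t(θ₀)⟫` (minus the accumulated G-effect). -/
theorem risk_first_order_g_effect
    {E : Type*} [NormedAddCommGroup E] [InnerProductSpace ℝ E] [CompleteSpace E]
    (T : ℕ) (θ₀ : E) (L : ℕ → E → ℝ) (R : E → ℝ)
    (hL : ∀ t < T, Differentiable ℝ (L t))
    (hgrad : ∀ t < T, Continuous (fun x => gradient (L t) x))
    (hR : DifferentiableAt ℝ R θ₀)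
    (θ : ℝ → ℕ → E)
    (hθ0 : ∀ η : ℝ, θ η 0 = θ₀)
    (hθ : ∀ (η : ℝ) (t : ℕ), θ η (t + 1) = θ η t - η • gradient (L t) (θ η t)) :
    HasDerivAt (fun η : ℝ => R (θ η T))
      (-(inner ℝ (gradient R θ₀) (∑ t ∈ Finset.range T, gradient (L t) θ₀) : ℝ)) 0 := by
  -- trajectory at η = 0 is constant
  have hzero : ∀ n : ℕ, θ 0 n = θ₀ := by
    intro n
    induction n with
    | zero => exact hθ0 0
    | succ n ih => rw [hθ, ih]; simp
  -- derivative of trajectory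
  have key : ∀ n ≤ T, HasDerivAt (fun η : ℝ => θ η n)
      (-(∑ t ∈ Finset.range n, gradient (L t) θ₀)) 0 := by
    intro n hn
    induction n with
    | zero =>
        simp only [Finset.range_zero, Finset.sum_empty, neg_zero]
        exact (hasDerivAt_const (0:ℝ) θ₀).congr_of_eventuallyEq
          (Eventually.of_forall fun η => hθ0 η)
    | succ n ih =>
        have hn' : n ≤ T := Nat.le_of_succ_le hn
        have ihn := ih hn'
        have hcont : ContinuousAt (fun η : ℝ => gradient (L n) (θ η n)) 0 :=
          ((hgrad n hn).continuousAt).comp ihn.continuousAt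
        have h2 : HasDerivAt (fun η : ℝ => η • gradient (L n) (θ η n))
            (gradient (L n) (θ 0 n)) 0 := smul_cont_hasDerivAt _ hcont
        have := ihn.sub h2
        rw [hzero n] at this
        refine HasDerivAt.congr_of_eventuallyEq ?_
          (Eventually.of_forall fun η => hθ η n)
        convert this using 1
        · rfl
        rw [Finset.sum_range_succ]
        abel
  have hT := key T le_rfl
  have hRg : HasFDerivAt R (fderiv ℝ R θ₀) θ₀ := hR.hasFDerivAt
  have hθ0T : θ 0 T = θ₀ := hzero T
  rw [← hθ0T] at hRg
  have comp := hRg.comp_hasDerivAt 0 hT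
  rw [hθ0T] at hRg
  convert comp using 1
  · rfl
  · rfl
  · rfl
  have : fderiv ℝ R (θ 0 T) = InnerProductSpace.toDual ℝ E (gradient R θ₀) := by
    rw [hθ0T]; exact (hR.hasGradientAt.hasFDerivAt).fderiv
  rw [this]
  simp [InnerProductSpace.toDual_apply_apply, inner_neg_right]
end

section
/- Let E be a real Hilbert space, β > 0 and c > 0 real numbers, and p : E → ℝ differentiable at θ ∈ E with p(θ) > 0. Then for every vector g ∈ E, the inner product of g with the gradient of the NPO loss f(θ') = (2/β) · log(1 + (p(θ')/c)^β) at θ factors as ⟪g, ∇f(θ)⟫ = (2 · (p(θ))^β / ((p(θ))^β + c^β)) · ⟪g, (p(θ))⁻¹ • ∇p(θ)⟫; in particular, taking g = ∇R(θ), the per-point G-effect of NPO equals the NPO weight times the per-point G-effect of gradient ascent. -/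
/-- Per-point G-effect factorization for NPO: for every vector `g`, the inner
product of `g` with the NPO gradient equals the NPO weight
`2 p(θ)^β / (p(θ)^β + c^β)` times the inner product of `g` with the
log-likelihood gradient `(p θ)⁻¹ • ∇p(θ)`. -/
theorem npo_g_effect_factorization
    {E : Type*} [NormedAddCommGroup E] [InnerProductSpace ℝ E] [CompleteSpace E]
    (β c : ℝ) (hβ : 0 < β) (hc : 0 < c)
    (p : E → ℝ) (θ : E) (hdiff : DifferentiableAt ℝ p θ) (hp : 0 < p θ) :
    ∀ g : E,
      (inner ℝ g (gradient (fun θ' => (2 / β) * Real.log (1 + (p θ' / c) ^ β)) θ) : ℝ)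
        = (2 * (p θ) ^ β / ((p θ) ^ β + c ^ β)) *
            (inner ℝ g ((p θ)⁻¹ • gradient p θ) : ℝ) := by
  intro g
  set u := p θ with hu
  have hu0 : u ≠ 0 := ne_of_gt hp
  have hc0 : c ≠ 0 := ne_of_gt hc
  have huc : u / c ≠ 0 := div_ne_zero hu0 hc0
  have hucpos : 0 < u / c := div_pos hp hc
  have hA : (0:ℝ) < u ^ β := Real.rpow_pos_of_pos hp β
  have hB : (0:ℝ) < c ^ β := Real.rpow_pos_of_pos hc β
  have h1 : (0:ℝ) < 1 + (u / c) ^ β := by positivity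
  -- derivative of the scalar function h(x) = (2/β) log (1 + (x/c)^β) at u
  have hd1 : HasDerivAt (fun x : ℝ => (x / c) ^ β) (β * (u / c) ^ (β - 1) * c⁻¹) u := by
    have := (Real.hasDerivAt_rpow_const (x := u / c) (p := β) (Or.inl huc))
    have h2 : HasDerivAt (fun x : ℝ => x / c) c⁻¹ u := by
      simpa using (hasDerivAt_id u).div_const c
    exact this.comp u h2
  have hd2 : HasDerivAt (fun x : ℝ => (2 / β) * Real.log (1 + (x / c) ^ β))
      ((2 / β) * ((1 + (u / c) ^ β)⁻¹ * (β * (u / c) ^ (β - 1) * c⁻¹))) u := by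
    have h3 : HasDerivAt (fun x : ℝ => 1 + (x / c) ^ β) (β * (u / c) ^ (β - 1) * c⁻¹) u :=
      by exact hd1.const_add 1
    have h4 := (Real.hasDerivAt_log (ne_of_gt h1)).comp u h3
    simpa [mul_comm] using h4.const_mul (2 / β)
  set d : ℝ := (2 / β) * ((1 + (u / c) ^ β)⁻¹ * (β * (u / c) ^ (β - 1) * c⁻¹)) with hdval
  -- gradient of the composition
  have hgrad : HasGradientAt (fun θ' => (2 / β) * Real.log (1 + (p θ' / c) ^ β))
      (d • gradient p θ) θ := by
    rw [hasGradientAt_iff_hasFDerivAt]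
    have hfd : HasFDerivAt (fun θ' => (2 / β) * Real.log (1 + (p θ' / c) ^ β))
        (d • fderiv ℝ p θ) θ := hd2.comp_hasFDerivAt θ hdiff.hasFDerivAt
    refine hfd.congr_fderiv ?_
    ext v
    simp [gradient, InnerProductSpace.toDual_symm_apply, real_inner_smul_left,
      real_inner_comm]
  rw [hgrad.gradient]
  have hscal : d = (2 * u ^ β / (u ^ β + c ^ β)) * u⁻¹ := by
    rw [hdval, Real.rpow_sub_one huc, Real.div_rpow hp.le hc.le]
    field_simp
    ring
  rw [real_inner_smul_right, real_inner_smul_right, hscal]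
  ring
end

section
/- For every real r > 0, the centered NPO loss converges to the gradient-ascent loss as the inverse temperature tends to zero: the function β ↦ (2/β) · log((1 + r^β)/2) tends to log r as β → 0⁺ (limit along positive reals approaching 0), where r^β is the real power. In particular, as β → 0, the NPO objective (2/β) log(1 + (p/c)^β) differs from log p − log c, the GA objective shifted by a constant, by a vanishing amount after subtracting (2/β) log 2. -/
lemma npo_main (r : ℝ) (hr : 0 < r) :
    Filter.Tendsto (fun β : ℝ => (2 / β) * Real.log ((1 + r ^ β) / 2))
      (nhdsWithin 0 (Set.Ioi 0)) (nhds (Real.log r)) := by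
  set f : ℝ → ℝ := fun β => Real.log ((1 + r ^ β) / 2) with hf
  have h1 : HasDerivAt (fun β : ℝ => r ^ β) (Real.log r) 0 := by
    have h0 : HasDerivAt (fun β : ℝ => β * Real.log r) (Real.log r) 0 := by
      simpa using (hasDerivAt_id (0:ℝ)).mul_const (Real.log r)
    have he := (Real.hasDerivAt_exp (0 * Real.log r)).comp 0 h0
    have : (fun β : ℝ => r ^ β) = fun β => Real.exp (β * Real.log r) := by
      funext β
      rw [Real.rpow_def_of_pos hr, mul_comm]
    rw [this]
    simpa [Function.comp_def] using he
  have h2 : HasDerivAt (fun β : ℝ => (1 + r ^ β) / 2) (Real.log r / 2) 0 :=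
    (h1.const_add 1).div_const 2
  have hd : HasDerivAt f (Real.log r / 2) 0 := by
    have := h2.log (by norm_num [Real.rpow_zero])
    simpa [Real.rpow_zero] using this
  have hs := hasDerivAt_iff_tendsto_slope.mp hd
  have hs' : Filter.Tendsto (slope f 0) (nhdsWithin 0 (Set.Ioi 0)) (nhds (Real.log r / 2)) :=
    hs.mono_left (nhdsWithin_mono _ (fun x hx => Set.mem_compl_singleton_iff.mpr (ne_of_gt hx)))
  have hm := hs'.const_mul 2
  have : (2 : ℝ) * (Real.log r / 2) = Real.log r := by ring
  rw [this] at hm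
  refine hm.congr' ?_
  filter_upwards [self_mem_nhdsWithin] with β hβ
  have hβ0 : (β : ℝ) ≠ 0 := ne_of_gt hβ
  simp [slope, f, hf]
  ring

/-- As the inverse temperature `β → 0⁺`, the centered NPO loss converges to the
GA loss: `(2/β) · log ((1 + r^β)/2) → log r`; in particular the NPO objective
`(2/β) log (1 + (p/c)^β)` differs from `log p - log c` by a vanishing amount
after subtracting `(2/β) log 2`. -/
theorem npo_tends_to_ga_as_beta_to_zero (r : ℝ) (hr : 0 < r) :
    Filter.Tendsto (fun β : ℝ => (2 / β) * Real.log ((1 + r ^ β) / 2))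
      (nhdsWithin 0 (Set.Ioi 0)) (nhds (Real.log r)) ∧
    ∀ p c : ℝ, 0 < p → 0 < c →
      Filter.Tendsto (fun β : ℝ =>
          (2 / β) * Real.log (1 + (p / c) ^ β) - (2 / β) * Real.log 2
            - (Real.log p - Real.log c))
        (nhdsWithin 0 (Set.Ioi 0)) (nhds 0) := by
  refine ⟨npo_main r hr, fun p c hp hc => ?_⟩
  have hpc : 0 < p / c := div_pos hp hc
  have h := (npo_main (p / c) hpc).sub_const (Real.log (p / c))
  rw [sub_self] at h
  refine h.congr' ?_
  filter_upwards [self_mem_nhdsWithin] with β hβ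
  have h1 : (0:ℝ) < 1 + (p / c) ^ β := by positivity
  rw [Real.log_div (ne_of_gt h1) (by norm_num), Real.log_div (ne_of_gt hp) (ne_of_gt hc)]
  ring
end
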